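/- arXiv:1009.4408 — 2 statements merged into one kernel-verified Lean document; each statement's English description precedes it below -/
import Mathlib

section
/- Let α ∈ (0,1) be irrational with convergents p_s/q_s, let n ≥ 1, and let s be such that q_s ≤ n < q_{s+1}. Consider the polynomial P(z,w) = (z^{p_s} − w^{q_s})^{⌊n/q_s⌋}. Then for all complex z with |z| ≤ 1, |P(e^z, e^{αz})| ≤ e^n (2/q_{s+1})^{⌊n/q_s⌋}. -/
noncomputable def cfGauss (α : ℝ) : ℕ → ℝ
  | 0 => Int.fract α
  | s + 1 => Int.fract (1 / cfGauss α s)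

noncomputable def cfA (α : ℝ) : ℕ → ℤ
  | 0 => ⌊α⌋
  | s + 1 => ⌊1 / cfGauss α s⌋

noncomputable def cfPQ (α : ℝ) : ℕ → ℤ × ℤ
  | 0 => (⌊α⌋, 1)
  | 1 => (cfA α 1 * ⌊α⌋ + 1, cfA α 1)
  | s + 2 => (cfA α (s + 2) * (cfPQ α (s + 1)).1 + (cfPQ α s).1,
              cfA α (s + 2) * (cfPQ α (s + 1)).2 + (cfPQ α s).2)

/-- Numerator `p_s` of the `s`-th continued fraction convergent of `α`. -/
noncomputable def cfP (α : ℝ) (s : ℕ) : ℤ := (cfPQ α s).1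

/-- Denominator `q_s` of the `s`-th continued fraction convergent of `α`. -/
noncomputable def cfQ (α : ℝ) (s : ℕ) : ℤ := (cfPQ α s).2

/-- Distance from a real number to the nearest integer. -/
noncomputable def distZ (x : ℝ) : ℝ := |x - round x|

/-- `D_α(n) = ∏_{k=1}^n dist(kα, ℤ)`. -/
noncomputable def Dalpha (α : ℝ) (n : ℕ) : ℝ := ∏ k ∈ Finset.Icc 1 n, distZ (k * α)

/-!
Put `δ = q_s α - p_s`. Then `e^{p_s z} - e^{q_s α z} = e^{q_s α z} (e^{-δ z} - 1)`, where the first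
factor has modulus at most `e^{q_s α}` and, since `|δ| ≤ 1 / q_{s+1}`, the second one at most
`2 / q_{s+1}`. Raising to the power `⌊n / q_s⌋` turns `e^{q_s α}` into at most `e^n`.
The bound on `|δ|` is Mathlib's `GenContFract.abs_sub_convs_le`, once `cfP` and `cfQ` are
identified with the numerators and denominators of `GenContFract.of α`.
-/

open GenContFract

section ContinuedFraction

variable {α : ℝ}

theorem Irrational.not_terminatedAt_genContFract_of (hα : Irrational α) (n : ℕ) :
    ¬(GenContFract.of α).TerminatedAt n := fun h =>
  hα <| by
    obtain ⟨q, rfl⟩ := (terminates_iff_rat α).1 ⟨n, h⟩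
    exact ⟨q, rfl⟩

theorem intFractPair_stream_eq_cfA_cfGauss (hα : Irrational α) (n : ℕ) :
    IntFractPair.stream α n = some ⟨cfA α n, cfGauss α n⟩ := by
  induction n with
  | zero => rfl
  | succ n ih =>
    have hsome := (of_terminatedAt_n_iff_succ_nth_intFractPair_stream_eq_none.not).1
      (hα.not_terminatedAt_genContFract_of n)
    have hfr : cfGauss α n ≠ 0 := fun h0 =>
      hsome (IntFractPair.stream_eq_none_of_fr_eq_zero ih h0)
    rw [IntFractPair.stream_succ_of_some ih hfr]
    simp [IntFractPair.of, cfA, cfGauss, one_div]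

theorem of_s_get?_eq_cfA (hα : Irrational α) (n : ℕ) :
    (GenContFract.of α).s.get? n = some ⟨1, cfA α (n + 1)⟩ :=
  get?_of_eq_some_of_succ_get?_intFractPair_stream (intFractPair_stream_eq_cfA_cfGauss hα (n + 1))

theorem of_nums_eq_cfP (hα : Irrational α) (n : ℕ) :
    (GenContFract.of α).nums n = cfP α n := by
  induction n using Nat.twoStepInduction with
  | zero => simp [of_h_eq_floor, cfP, cfPQ]
  | one => simp [first_num_eq (of_s_get?_eq_cfA hα 0), of_h_eq_floor, cfP, cfPQ]
  | more n ih₀ ih₁ =>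
    rw [nums_recurrence (of_s_get?_eq_cfA hα (n + 1)) ih₀ ih₁]
    simp [cfP, cfPQ]

theorem of_dens_eq_cfQ (hα : Irrational α) (n : ℕ) :
    (GenContFract.of α).dens n = cfQ α n := by
  induction n using Nat.twoStepInduction with
  | zero => simp [cfQ, cfPQ]
  | one => simp [first_den_eq (of_s_get?_eq_cfA hα 0), cfQ, cfPQ]
  | more n ih₀ ih₁ =>
    rw [dens_recurrence (of_s_get?_eq_cfA hα (n + 1)) ih₀ ih₁]
    simp [cfQ, cfPQ]

theorem one_le_cfQ (hα : Irrational α) (n : ℕ) : 1 ≤ cfQ α n := by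
  have h := succ_nth_fib_le_of_nth_den (K := ℝ) (v := α) (n := n)
    (Or.inr (hα.not_terminatedAt_genContFract_of _))
  rw [of_dens_eq_cfQ hα] at h
  exact_mod_cast (Nat.one_le_cast.2 (Nat.fib_pos.2 n.succ_pos)).trans h

theorem abs_cfQ_mul_sub_cfP_le (hα : Irrational α) (n : ℕ) :
    |cfQ α n * α - cfP α n| ≤ 1 / cfQ α (n + 1) := by
  have h := abs_sub_convs_le (hα.not_terminatedAt_genContFract_of n)
  rw [conv_eq_num_div_den, of_nums_eq_cfP hα, of_dens_eq_cfQ hα, of_dens_eq_cfQ hα] at h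
  have hq : (0 : ℝ) < cfQ α n := by exact_mod_cast (one_le_cfQ hα n).trans_lt' zero_lt_one
  calc |cfQ α n * α - cfP α n| = cfQ α n * |α - cfP α n / cfQ α n| := by
        rw [← abs_of_pos hq, ← abs_mul, abs_of_pos hq, mul_sub, mul_div_cancel₀ _ hq.ne']
    _ ≤ cfQ α n * (1 / (cfQ α n * cfQ α (n + 1))) := by gcongr
    _ = 1 / cfQ α (n + 1) := by field_simp

theorem abs_cfQ_mul_sub_cfP_le_one (hα : Irrational α) (n : ℕ) :
    |cfQ α n * α - cfP α n| ≤ 1 := by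
  have hq : (1 : ℝ) ≤ cfQ α (n + 1) := by exact_mod_cast one_le_cfQ hα (n + 1)
  exact (abs_cfQ_mul_sub_cfP_le hα n).trans (div_le_one_of_le₀ hq (zero_le_one.trans hq))

theorem cfP_nonneg (hα : Irrational α) (hα₀ : 0 < α) (n : ℕ) : 0 ≤ cfP α n := by
  have hq : (1 : ℝ) ≤ cfQ α n := by exact_mod_cast one_le_cfQ hα n
  have hδ := (abs_le.1 (abs_cfQ_mul_sub_cfP_le_one hα n)).2
  have : (-1 : ℝ) < cfP α n := by nlinarith
  have : (-1 : ℤ) < cfP α n := by exact_mod_cast this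
  omega

end ContinuedFraction

theorem exp_pow_sub_exp_mul_pow (z : ℂ) (α : ℝ) (p q : ℕ) :
    Complex.exp z ^ p - Complex.exp (α * z) ^ q =
      Complex.exp (q * α * z) * (Complex.exp (-((q * α - p : ℝ) : ℂ) * z) - 1) := by
  rw [← Complex.exp_nat_mul, ← Complex.exp_nat_mul, mul_sub, ← Complex.exp_add]
  push_cast
  ring_nf

theorem norm_exp_pow_sub_exp_mul_pow_le {z : ℂ} (hz : ‖z‖ ≤ 1) {α : ℝ} {p q : ℕ}
    (hδ : |q * α - p| ≤ 1) :
    ‖Complex.exp z ^ p - Complex.exp (α * z) ^ q‖ ≤ Real.exp (q * |α|) * (2 * |q * α - p|) := by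
  have hw : ‖-((q * α - p : ℝ) : ℂ) * z‖ ≤ |q * α - p| := by
    rw [norm_mul, norm_neg, Complex.norm_real, Real.norm_eq_abs]
    exact mul_le_of_le_one_right (abs_nonneg _) hz
  rw [exp_pow_sub_exp_mul_pow, norm_mul]
  gcongr
  · calc ‖Complex.exp (q * α * z)‖ ≤ Real.exp ‖(q * α * z : ℂ)‖ := Complex.norm_exp_le_exp_norm _
      _ ≤ Real.exp (q * |α|) := by
        gcongr
        rw [norm_mul, norm_mul, Complex.norm_natCast, Complex.norm_real, Real.norm_eq_abs]
        exact mul_le_of_le_one_right (by positivity) hz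
  · exact (Complex.norm_exp_sub_one_le (hw.trans hδ)).trans (by gcongr)

theorem poly_on_exp_curve_bound_general (α : ℝ) (hα : Irrational α)
    (h01 : α ∈ Set.Ioo (0 : ℝ) 1) (n s : ℕ)
    (z : ℂ) (hz : ‖z‖ ≤ 1) :
    ‖(Complex.exp z ^ (cfP α s).toNat -
        Complex.exp ((α : ℂ) * z) ^ (cfQ α s).toNat) ^ (n / (cfQ α s).toNat)‖ ≤
      Real.exp n * (2 / (cfQ α (s + 1) : ℝ)) ^ (n / (cfQ α s).toNat) := by
  set p := (cfP α s).toNat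
  set q := (cfQ α s).toNat
  have hp : (p : ℝ) = cfP α s := by exact_mod_cast Int.toNat_of_nonneg (cfP_nonneg hα h01.1 s)
  have hq : (q : ℝ) = cfQ α s := by
    exact_mod_cast Int.toNat_of_nonneg (zero_le_one.trans (one_le_cfQ hα s))
  have hδ := abs_cfQ_mul_sub_cfP_le hα s
  have hδ₁ := abs_cfQ_mul_sub_cfP_le_one hα s
  rw [← hp, ← hq] at hδ hδ₁
  have hexp : Real.exp (q * |α|) ^ (n / q) ≤ Real.exp n := by
    rw [← Real.exp_nat_mul, abs_of_pos h01.1]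
    gcongr
    calc (n / q : ℕ) * (q * α) ≤ (n / q : ℕ) * q := by
          gcongr; exact mul_le_of_le_one_right (Nat.cast_nonneg _) h01.2.le
      _ ≤ n := by exact_mod_cast Nat.div_mul_le_self n q
  rw [norm_pow]
  calc ‖Complex.exp z ^ p - Complex.exp (α * z) ^ q‖ ^ (n / q)
      ≤ (Real.exp (q * |α|) * (2 * |q * α - p|)) ^ (n / q) := by
        gcongr; exact norm_exp_pow_sub_exp_mul_pow_le hz hδ₁
    _ = Real.exp (q * |α|) ^ (n / q) * (2 * |q * α - p|) ^ (n / q) := mul_pow _ _ _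
    _ ≤ Real.exp n * (2 / (cfQ α (s + 1) : ℝ)) ^ (n / q) := by
        gcongr
        calc 2 * |q * α - p| ≤ 2 * (1 / (cfQ α (s + 1) : ℝ)) := by gcongr
          _ = 2 / (cfQ α (s + 1) : ℝ) := by ring

theorem poly_on_exp_curve_bound (α : ℝ) (hα : Irrational α)
    (h01 : α ∈ Set.Ioo (0 : ℝ) 1) (n s : ℕ) (hn : 1 ≤ n)
    (h1 : (cfQ α s : ℝ) ≤ n) (h2 : (n : ℝ) < cfQ α (s + 1))
    (z : ℂ) (hz : ‖z‖ ≤ 1) :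
    ‖(Complex.exp z ^ (cfP α s).toNat -
        Complex.exp ((α : ℂ) * z) ^ (cfQ α s).toNat) ^ (n / (cfQ α s).toNat)‖ ≤
      Real.exp n * (2 / (cfQ α (s + 1) : ℝ)) ^ (n / (cfQ α s).toNat) :=
  poly_on_exp_curve_bound_general α hα h01 n s z hz
end

section
/- The set S = {α ∈ (0,1) \ ℚ : limsup_{s→∞} (log q_{s+1})/(q_s² log q_s) = +∞} contains a dense G_δ subset of (0,1); in particular S is uncountable. -/
/-!
If `|α - m/n| < e^{-n³}` and `q_s ≤ n < q_{s+1}`, compare `m/n` with the convergent `p_s/q_s`: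
either they coincide, and then `1/(q_s(q_s + q_{s+1})) < |α - p_s/q_s|` applies, or they are at
least `1/(n q_s)` apart while `|α - p_s/q_s| < 1/(q_s q_{s+1})`. Either way
`e^{n³} < 2 n² q_{s+1}`, so `log q_{s+1} > n³ - 2n` while `q_s² log q_s ≤ n² log n = o(n³)`.
The irrationals with such approximations for infinitely many `n` form `limsup A'_n`, a countable
intersection of open sets each containing `ℚ`; by Baire it is a dense `Gδ`, hence uncountable in
every open interval.
-/

open Filter

lemma exists_apply_le_and_lt_apply_succ {β : Type*} [LinearOrder β] {f : ℕ → β} {x : β}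
    (h₀ : f 0 ≤ x) {k : ℕ} (hk : x < f k) : ∃ s, f s ≤ x ∧ x < f (s + 1) := by
  induction k with
  | zero => exact absurd h₀ (not_le.2 hk)
  | succ k ih =>
    by_cases hx : x < f k
    · exact ih hx
    · exact ⟨k, not_lt.1 hx, hk⟩

lemma one_div_mul_le_abs_div_sub_div {a b m n : ℤ} (hm : 0 < m) (hn : 0 < n)
    (h : (a / m : ℝ) ≠ b / n) : 1 / (m * n : ℝ) ≤ |(a / m : ℝ) - b / n| := by
  have hm' : (0 : ℝ) < m := by exact_mod_cast hm
  have hn' : (0 : ℝ) < n := by exact_mod_cast hn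
  have hne : a * n - b * m ≠ 0 := by
    refine fun h' => h ?_
    rw [div_eq_div_iff hm'.ne' hn'.ne']
    exact_mod_cast sub_eq_zero.1 h'
  have hsub : (a / m : ℝ) - b / n = ((a * n - b * m : ℤ) : ℝ) / (m * n) := by
    push_cast
    field_simp
  rw [hsub, abs_div, abs_of_pos (mul_pos hm' hn')]
  gcongr
  exact_mod_cast Int.one_le_abs hne

lemma le_div_sq_mul_log_of_cube_sub_lt {M q n L : ℝ} (hM : 0 ≤ M) (hq : 2 ≤ q) (hqn : q ≤ n)
    (hMn : 2 * M * Real.log n ≤ n) (hL : n ^ 3 - 2 * n < L) : M ≤ L / (q ^ 2 * Real.log q) := by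
  have hlogq : 0 < Real.log q := Real.log_pos (by linarith)
  have hlog : Real.log q ≤ Real.log n := Real.log_le_log (by linarith) hqn
  rw [le_div_iff₀ (by positivity)]
  calc M * (q ^ 2 * Real.log q) ≤ n ^ 2 * (M * Real.log n) := by
        rw [mul_left_comm]; gcongr
    _ ≤ n ^ 2 * (n / 2) := by gcongr; linarith
    _ ≤ L := by nlinarith

lemma limsup_coe_eq_top_of_frequently_le {ι : Type*} {f : Filter ι} {u : ι → ℝ}
    (h : ∀ M : ℝ, ∃ᶠ i in f, M ≤ u i) : limsup (fun i => (u i : EReal)) f = ⊤ :=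
  (EReal.eq_top_iff_forall_lt _).2 fun y => (EReal.coe_lt_coe_iff.2 (lt_add_one y)).trans_le
    (le_limsup_of_frequently_le' ((h (y + 1)).mono fun _ hi => EReal.coe_le_coe_iff.2 hi))

section ContinuedFraction

variable {α : ℝ}

lemma cfQ_add_two (s : ℕ) : cfQ α (s + 2) = cfA α (s + 2) * cfQ α (s + 1) + cfQ α s := rfl

lemma cfP_add_two (s : ℕ) : cfP α (s + 2) = cfA α (s + 2) * cfP α (s + 1) + cfP α s := rfl

lemma one_div_cfGauss (s : ℕ) : 1 / cfGauss α s = cfA α (s + 1) + cfGauss α (s + 1) :=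
  (Int.floor_add_fract _).symm

lemma cfGauss_lt_one (s : ℕ) : cfGauss α s < 1 := by
  cases s <;> exact Int.fract_lt_one _

lemma cfP_mul_cfQ_sub_cfP_mul_cfQ (s : ℕ) :
    cfP α (s + 1) * cfQ α s - cfP α s * cfQ α (s + 1) = (-1) ^ s := by
  induction s with
  | zero => show (cfA α 1 * ⌊α⌋ + 1) * 1 - ⌊α⌋ * cfA α 1 = 1; ring
  | succ s ih =>
    rw [cfP_add_two, cfQ_add_two, pow_succ]
    linear_combination -ih

variable (hα : Irrational α)
include hα

lemma irrational_cfGauss (s : ℕ) : Irrational (cfGauss α s) := by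
  induction s with
  | zero =>
    show Irrational (Int.fract α)
    exact Int.self_sub_floor α ▸ hα.sub_intCast _
  | succ s ih =>
    show Irrational (Int.fract (1 / cfGauss α s))
    exact Int.self_sub_floor (1 / cfGauss α s) ▸ (one_div (cfGauss α s) ▸ ih.inv).sub_intCast _

lemma cfGauss_pos (s : ℕ) : 0 < cfGauss α s := by
  refine lt_of_le_of_ne ?_ (irrational_cfGauss hα s).ne_zero.symm
  cases s <;> exact Int.fract_nonneg _

lemma one_le_cfA (s : ℕ) : 1 ≤ cfA α (s + 1) := by
  have h : 1 < 1 / cfGauss α s :=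
    (one_lt_div (cfGauss_pos hα s)).2 (cfGauss_lt_one s)
  exact Int.le_floor.2 (by exact_mod_cast h.le)

lemma one_le_cfQ_s16 (s : ℕ) : 1 ≤ cfQ α s := by
  induction s using Nat.strong_induction_on with
  | _ s ih =>
    match s with
    | 0 => exact le_rfl
    | 1 => exact one_le_cfA hα 0
    | s + 2 =>
      rw [cfQ_add_two]
      nlinarith [one_le_cfA hα (s + 1), ih s (by omega), ih (s + 1) (by omega)]

lemma cfQ_le_cfQ_succ (s : ℕ) : cfQ α s ≤ cfQ α (s + 1) := by
  cases s with
  | zero => exact one_le_cfA hα 0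
  | succ s =>
    rw [cfQ_add_two]
    nlinarith [one_le_cfA hα (s + 1), one_le_cfQ_s16 hα s, one_le_cfQ_s16 hα (s + 1)]

lemma cfQ_mono : Monotone (cfQ α) :=
  monotone_nat_of_le_succ (cfQ_le_cfQ_succ hα)

lemma natCast_le_cfQ (s : ℕ) : (s : ℤ) ≤ cfQ α s := by
  induction s using Nat.strong_induction_on with
  | _ s ih =>
    match s with
    | 0 => exact zero_le_one
    | 1 => exact one_le_cfA hα 0
    | s + 2 =>
      rw [cfQ_add_two]
      push_cast
      have hs := ih (s + 1) (by omega)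
      push_cast at hs
      nlinarith [one_le_cfA hα (s + 1), one_le_cfQ_s16 hα s, one_le_cfQ_s16 hα (s + 1)]

lemma cfGauss_mul_cfA_add_cfGauss (s : ℕ) :
    cfGauss α s * (cfA α (s + 1) + cfGauss α (s + 1)) = 1 := by
  rw [← one_div_cfGauss, mul_one_div_cancel (cfGauss_pos hα s).ne']

lemma mul_cfQ_add_cfQ_mul_cfGauss (s : ℕ) :
    α * (cfQ α (s + 1) + cfQ α s * cfGauss α (s + 1)) =
      cfP α (s + 1) + cfP α s * cfGauss α (s + 1) := by
  induction s with
  | zero =>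
    have hα₀ : (⌊α⌋ : ℝ) + cfGauss α 0 = α := Int.floor_add_fract α
    show α * ((cfA α 1 : ℤ) + ((1 : ℤ) : ℝ) * cfGauss α 1) =
      ((cfA α 1 * ⌊α⌋ + 1 : ℤ) : ℝ) + (⌊α⌋ : ℝ) * cfGauss α 1
    push_cast
    linear_combination (-(cfA α 1 : ℝ) - cfGauss α 1) * hα₀ +
      cfGauss_mul_cfA_add_cfGauss hα 0
  | succ s ih =>
    rw [cfQ_add_two, cfP_add_two]
    push_cast
    linear_combination (cfA α (s + 2) + cfGauss α (s + 2) : ℝ) * ih +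
      (cfP α s - α * cfQ α s : ℝ) * cfGauss_mul_cfA_add_cfGauss hα (s + 1)

lemma cfQ_mul_sub_cfP_mul (s : ℕ) :
    (cfQ α s * α - cfP α s) * (cfQ α (s + 1) + cfQ α s * cfGauss α (s + 1)) = (-1) ^ s := by
  have hdet : (cfP α (s + 1) * cfQ α s - cfP α s * cfQ α (s + 1) : ℝ) = (-1) ^ s := by
    exact_mod_cast cfP_mul_cfQ_sub_cfP_mul_cfQ s
  linear_combination (cfQ α s : ℝ) * mul_cfQ_add_cfQ_mul_cfGauss hα s + hdet

lemma abs_sub_cfP_div_cfQ (s : ℕ) :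
    |α - cfP α s / cfQ α s| = 1 / (cfQ α s * (cfQ α (s + 1) + cfQ α s * cfGauss α (s + 1))) := by
  have hq : (0 : ℝ) < cfQ α s := by exact_mod_cast one_le_cfQ_s16 hα s
  have hD : (0 : ℝ) < cfQ α (s + 1) + cfQ α s * cfGauss α (s + 1) := by
    have := cfGauss_pos hα (s + 1)
    have : (0 : ℝ) < cfQ α (s + 1) := by exact_mod_cast one_le_cfQ_s16 hα (s + 1)
    positivity
  have hqα : (cfQ α s * α - cfP α s : ℝ) = cfQ α s * (α - cfP α s / cfQ α s) := by
    field_simp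
  have h := congrArg abs (cfQ_mul_sub_cfP_mul hα s)
  rw [hqα, abs_mul, abs_mul, abs_pow, abs_neg, abs_one, one_pow, abs_of_pos hD,
    abs_of_pos hq] at h
  rw [eq_div_iff (by positivity)]
  linear_combination h

lemma abs_sub_cfP_div_cfQ_lt (s : ℕ) :
    |α - cfP α s / cfQ α s| < 1 / (cfQ α s * cfQ α (s + 1)) := by
  have hq : (0 : ℝ) < cfQ α s := by exact_mod_cast one_le_cfQ_s16 hα s
  have hq₁ : (0 : ℝ) < cfQ α (s + 1) := by exact_mod_cast one_le_cfQ_s16 hα (s + 1)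
  rw [abs_sub_cfP_div_cfQ hα]
  gcongr
  linarith [mul_pos hq (cfGauss_pos hα (s + 1))]

lemma one_div_lt_abs_sub_cfP_div_cfQ (s : ℕ) :
    1 / (cfQ α s * (cfQ α s + cfQ α (s + 1))) < |α - cfP α s / cfQ α s| := by
  have hq : (0 : ℝ) < cfQ α s := by exact_mod_cast one_le_cfQ_s16 hα s
  have hq₁ : (0 : ℝ) < cfQ α (s + 1) := by exact_mod_cast one_le_cfQ_s16 hα (s + 1)
  rw [abs_sub_cfP_div_cfQ hα]
  have := cfGauss_pos hα (s + 1)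
  apply one_div_lt_one_div_of_lt (by positivity)
  nlinarith [mul_pos (mul_pos hq hq) (sub_pos.2 (cfGauss_lt_one (α := α) (s + 1)))]

lemma exists_cfQ_le_and_lt_cfQ (n : ℕ) (hn : 1 ≤ n) :
    ∃ s, cfQ α s ≤ n ∧ (n : ℤ) < cfQ α (s + 1) :=
  exists_apply_le_and_lt_apply_succ (show (1 : ℤ) ≤ n by exact_mod_cast hn)
    ((Int.lt_add_one_iff.2 le_rfl).trans_le (by exact_mod_cast natCast_le_cfQ hα (n + 1)))

lemma one_div_lt_abs_sub_div_of_cfQ_le {s n : ℕ} (m : ℤ) (hsn : cfQ α s ≤ n)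
    (hns : (n : ℤ) < cfQ α (s + 1)) : 1 / (2 * n ^ 2 * cfQ α (s + 1)) < |α - m / n| := by
  have hq : (1 : ℝ) ≤ cfQ α s := by exact_mod_cast one_le_cfQ_s16 hα s
  have hqn : (cfQ α s : ℝ) ≤ n := by exact_mod_cast hsn
  have hnq : (n : ℝ) + 1 ≤ cfQ α (s + 1) := by exact_mod_cast hns
  have hn1 : (1 : ℝ) ≤ n := hq.trans hqn
  have hn : (0 : ℝ) < n := by linarith
  have hq₁ : (1 : ℝ) ≤ cfQ α (s + 1) := by linarith
  by_cases hconv : (m / n : ℝ) = cfP α s / cfQ α s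
  · rw [hconv]
    refine lt_of_le_of_lt (one_div_le_one_div_of_le (by positivity) ?_)
      (one_div_lt_abs_sub_cfP_div_cfQ hα s)
    calc (cfQ α s * (cfQ α s + cfQ α (s + 1)) : ℝ) ≤ n * (n + cfQ α (s + 1)) := by gcongr
      _ ≤ n * (2 * cfQ α (s + 1)) := by gcongr; linarith
      _ ≤ 2 * n ^ 2 * cfQ α (s + 1) := by nlinarith [mul_le_mul_of_nonneg_right hn1 hn.le]
  · have hgap := one_div_mul_le_abs_div_sub_div (Int.natCast_pos.2 (by exact_mod_cast hn))
      (by linarith [one_le_cfQ_s16 hα s]) hconv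
    push_cast at hgap
    have hdist := abs_sub_le (m / n : ℝ) α (cfP α s / cfQ α s)
    rw [abs_sub_comm (m / n : ℝ) α] at hdist
    have hconv_err := abs_sub_cfP_div_cfQ_lt hα s
    have hbound : (1 : ℝ) / (2 * n ^ 2 * cfQ α (s + 1)) ≤
        1 / (n * cfQ α s) - 1 / (cfQ α s * cfQ α (s + 1)) :=
      calc (1 : ℝ) / (2 * n ^ 2 * cfQ α (s + 1)) ≤ 1 / (n * cfQ α s * cfQ α (s + 1)) := by
            apply one_div_le_one_div_of_le (by positivity)
            nlinarith [mul_le_mul_of_nonneg_right hqn hn.le]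
        _ ≤ (cfQ α (s + 1) - n) / (n * cfQ α s * cfQ α (s + 1)) := by
            gcongr; linarith
        _ = 1 / (n * cfQ α s) - 1 / (cfQ α s * cfQ α (s + 1)) := by
            field_simp
    linarith

lemma cube_sub_lt_log_cfQ_succ {s n : ℕ} {m : ℤ} (hsn : cfQ α s ≤ n)
    (hns : (n : ℤ) < cfQ α (s + 1)) (happ : |α - m / n| < Real.exp (-(n : ℝ) ^ 3)) :
    (n : ℝ) ^ 3 - 2 * n < Real.log (cfQ α (s + 1)) := by
  have hn : (1 : ℝ) ≤ n := by exact_mod_cast (one_le_cfQ_s16 hα s).trans hsn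
  have hq₁ : (0 : ℝ) < cfQ α (s + 1) := by exact_mod_cast one_le_cfQ_s16 hα (s + 1)
  have h := (one_div_lt_abs_sub_div_of_cfQ_le hα m hsn hns).trans happ
  rw [Real.exp_neg, one_div, inv_lt_inv₀ (by positivity) (Real.exp_pos _)] at h
  have hexp : 2 * (n : ℝ) ^ 2 ≤ Real.exp (2 * n) := by
    nlinarith [Real.quadratic_le_exp_of_nonneg (x := 2 * n) (by positivity)]
  rw [Real.lt_log_iff_exp_lt hq₁, Real.exp_sub, div_lt_iff₀ (Real.exp_pos _)]
  nlinarith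

lemma frequently_le_log_cfQ_succ_div
    (happ : ∃ᶠ n : ℕ in atTop, ∃ m : ℤ, |α - m / n| < Real.exp (-(n : ℝ) ^ 3)) (M : ℝ) :
    ∃ᶠ s in atTop, M ≤ Real.log (cfQ α (s + 1)) / ((cfQ α s : ℝ) ^ 2 * Real.log (cfQ α s)) := by
  wlog hM : 0 < M generalizing M with H
  · exact (H 1 one_pos).mono fun s hs => (not_lt.1 hM).trans (zero_le_one.trans hs)
  have hlog : ∀ᶠ n : ℕ in atTop, 2 * M * Real.log n ≤ n := by
    filter_upwards [tendsto_natCast_atTop_atTop.eventually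
      (Real.isLittleO_log_id_atTop.def (c := 1 / (2 * M)) (by positivity))] with n hn
    rw [Real.norm_eq_abs, Real.norm_eq_abs, id, Nat.abs_cast] at hn
    calc 2 * M * Real.log n ≤ 2 * M * (1 / (2 * M) * n) := by gcongr; exact (le_abs_self _).trans hn
      _ = n := by field_simp
  rw [frequently_atTop]
  intro T
  obtain ⟨n, ⟨m, hm⟩, hMn, hTn⟩ := (happ.and_eventually
    (hlog.and (tendsto_natCast_atTop_atTop.eventually_ge_atTop (cfQ α (max T 2))))).exists
  obtain ⟨s, hsn, hns⟩ :=
    exists_cfQ_le_and_lt_cfQ hα n (by exact_mod_cast (one_le_cfQ_s16 hα _).trans hTn)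
  have hTs : max T 2 ≤ s := by
    by_contra! h
    exact (hns.trans_le (cfQ_mono hα h)).not_ge hTn
  have hq : (2 : ℝ) ≤ cfQ α s := by
    exact_mod_cast (show (2 : ℤ) ≤ s by exact_mod_cast le_of_max_le_right hTs).trans
      (natCast_le_cfQ hα s)
  exact ⟨s, le_of_max_le_left hTs, le_div_sq_mul_log_of_cube_sub_lt hM.le hq
    (by exact_mod_cast hsn) hMn (cube_sub_lt_log_cfQ_succ hα hsn hns hm)⟩

end ContinuedFraction

lemma isGδ_limsup_of_isOpen {X : Type*} [TopologicalSpace X] {s : ℕ → Set X}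
    (hs : ∀ n, IsOpen (s n)) : IsGδ (limsup s atTop) := by
  rw [limsup_eq_iInf_iSup_of_nat]
  exact .iInter fun _ => (isOpen_iUnion fun n => isOpen_iUnion fun _ => hs n).isGδ

lemma dense_limsup_of_isOpen {X : Type*} [TopologicalSpace X] [BaireSpace X] {s : ℕ → Set X}
    (hs : ∀ n, IsOpen (s n)) (hd : ∀ N, Dense (⋃ n ≥ N, s n)) : Dense (limsup s atTop) := by
  rw [limsup_eq_iInf_iSup_of_nat]
  exact dense_iInter_of_isOpen (fun _ => isOpen_iUnion fun n => isOpen_iUnion fun _ => hs n) hd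

lemma not_countable_inter_of_isGδ_of_dense {E : Type*} [NormedAddCommGroup E] [NormedSpace ℝ E]
    [CompleteSpace E] [Nontrivial E] {s U : Set E} (hs : IsGδ s) (hd : Dense s) (hU : IsOpen U)
    (hne : U.Nonempty) : ¬ (U ∩ s).Countable := fun hc => by
  obtain ⟨x, hxU, hxs, hx⟩ :=
    (hd.inter_of_Gδ hs hc.isGδ_compl (hc.dense_compl ℝ)).inter_open_nonempty U hU hne
  exact hx ⟨hxU, hxs⟩

/-- The paper's `A'_n`, with `m` ranging over all of `ℤ` and no coprimality condition. -/
def approxSet (n : ℕ) : Set ℝ := ⋃ m : ℤ, Metric.ball ((m : ℝ) / n) (Real.exp (-(n : ℝ) ^ 3))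

lemma isOpen_approxSet (n : ℕ) : IsOpen (approxSet n) :=
  isOpen_iUnion fun _ => Metric.isOpen_ball

lemma range_ratCast_subset_biUnion_approxSet (N : ℕ) :
    Set.range ((↑) : ℚ → ℝ) ⊆ ⋃ n ≥ N, approxSet n := by
  rintro _ ⟨r, rfl⟩
  simp only [Set.mem_iUnion, approxSet]
  refine ⟨r.den * (N + 1), by nlinarith [r.pos], r.num * (N + 1), ?_⟩
  have hcenter : ((r.num * (N + 1) : ℤ) : ℝ) / ((r.den * (N + 1) : ℕ) : ℝ) = r := by
    push_cast
    rw [mul_div_mul_right _ _ (by positivity), Rat.cast_def]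
  rw [hcenter]
  exact Metric.mem_ball_self (Real.exp_pos _)

lemma mem_limsup_approxSet_iff {x : ℝ} : x ∈ limsup approxSet atTop ↔
    ∃ᶠ n : ℕ in atTop, ∃ m : ℤ, |x - m / n| < Real.exp (-(n : ℝ) ^ 3) := by
  simp only [mem_limsup_iff_frequently_mem, approxSet, Set.mem_iUnion, Metric.mem_ball,
    Real.dist_eq]

theorem S_contains_dense_Gdelta :
    ∃ G : Set ℝ,
      G ⊆ {α : ℝ | α ∈ Set.Ioo (0 : ℝ) 1 ∧ Irrational α ∧
        Filter.atTop.limsup (fun s : ℕ =>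
          ((Real.log (cfQ α (s + 1)) /
            ((cfQ α s : ℝ) ^ 2 * Real.log (cfQ α s)) : ℝ) : EReal)) = ⊤} ∧
      IsGδ G ∧ Set.Ioo (0 : ℝ) 1 ⊆ closure G ∧
      ¬ ({α : ℝ | α ∈ Set.Ioo (0 : ℝ) 1 ∧ Irrational α ∧
        Filter.atTop.limsup (fun s : ℕ =>
          ((Real.log (cfQ α (s + 1)) /
            ((cfQ α s : ℝ) ^ 2 * Real.log (cfQ α s)) : ℝ) : EReal)) = ⊤} : Set ℝ).Countable := by
  set L := {x : ℝ | Irrational x} ∩ limsup approxSet atTop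
  have hlimsup := isGδ_limsup_of_isOpen isOpen_approxSet
  have hLδ : IsGδ L := IsGδ.setOfPred_irrational.inter hlimsup
  have hLd : Dense L := dense_irrational.inter_of_Gδ IsGδ.setOfPred_irrational hlimsup <|
    dense_limsup_of_isOpen isOpen_approxSet fun N =>
      Rat.denseRange_cast.mono (range_ratCast_subset_biUnion_approxSet N)
  have hsub : Set.Ioo 0 1 ∩ L ⊆ {α : ℝ | α ∈ Set.Ioo (0 : ℝ) 1 ∧ Irrational α ∧
      Filter.atTop.limsup (fun s : ℕ =>
        ((Real.log (cfQ α (s + 1)) / ((cfQ α s : ℝ) ^ 2 * Real.log (cfQ α s)) : ℝ) : EReal)) = ⊤} :=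
    fun α ⟨hα₀₁, hα, happ⟩ => ⟨hα₀₁, hα, limsup_coe_eq_top_of_frequently_le
      (frequently_le_log_cfQ_succ_div hα (mem_limsup_approxSet_iff.1 happ))⟩
  exact ⟨_, hsub, isOpen_Ioo.isGδ.inter hLδ, hLd.open_subset_closure_inter isOpen_Ioo,
    fun hc => not_countable_inter_of_isGδ_of_dense hLδ hLd isOpen_Ioo
      (Set.nonempty_Ioo.2 zero_lt_one) (hc.mono hsub)⟩
end
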